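/- Binomial-sum identity for the extended Bell numbers: for all natural numbers a and b, B(a, b+1) = Σ_{i=0}^{a} C(a,i) · B(i, b), where C(a,i) denotes the binomial coefficient. -/
import Mathlib

namespace SPD

/-- The extended Bell numbers: `B(0,b) = 1` and `B(a+1,b) = b·B(a,b) + B(a,b+1)`;
`B(a,0)` is the `a`-th Bell number. -/
def extBell : ℕ → ℕ → ℕ
  | 0, _ => 1
  | a + 1, b => b * extBell a b + extBell a (b + 1)

end SPD

/-- **binomial-sum identity for the extended Bell numbers.**
For all natural numbers `a` and `b`, `B(a, b+1) = Σ_{i=0}^{a} C(a,i) · B(i, b)`. -/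
theorem extBell_binomial_sum (a b : ℕ) :
    SPD.extBell a (b + 1) = ∑ i ∈ Finset.range (a + 1), a.choose i * SPD.extBell i b := by
  induction a generalizing b with
  | zero => simp [SPD.extBell]
  | succ a ih =>
    have h1 : ∑ i ∈ Finset.range (a + 1 + 1), (a+1).choose i * SPD.extBell i b
        = (∑ i ∈ Finset.range (a + 1), a.choose i * SPD.extBell (i+1) b)
          + ((∑ i ∈ Finset.range (a + 1), a.choose (i+1) * SPD.extBell (i+1) b) + 1) := by
      rw [Finset.sum_range_succ']
      simp only [Nat.choose_succ_succ, add_mul, Finset.sum_add_distrib, Nat.choose_zero_right,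
        SPD.extBell, one_mul, mul_one]
      ring
    have h2 : (∑ i ∈ Finset.range (a + 1), a.choose (i+1) * SPD.extBell (i+1) b) + 1
        = ∑ i ∈ Finset.range (a + 1), a.choose i * SPD.extBell i b := by
      have h := Finset.sum_range_succ' (fun i => a.choose i * SPD.extBell i b) (a+1)
      rw [Finset.sum_range_succ] at h
      simp only [Nat.choose_succ_self, zero_mul, add_zero, Nat.choose_zero_right,
        SPD.extBell.eq_1, one_mul, mul_one] at h
      linarith
    have h3 : (∑ i ∈ Finset.range (a + 1), a.choose i * SPD.extBell (i+1) b)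
        = b * (∑ i ∈ Finset.range (a + 1), a.choose i * SPD.extBell i b)
          + ∑ i ∈ Finset.range (a + 1), a.choose i * SPD.extBell i (b+1) := by
      rw [Finset.mul_sum, ← Finset.sum_add_distrib]
      refine Finset.sum_congr rfl fun i _ => ?_
      simp [SPD.extBell]; ring
    rw [h1, h2, h3, ← ih b, ← ih (b+1)]
    show SPD.extBell (a+1) (b+1) = _
    simp [SPD.extBell]
    ring
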